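/- Let α ∈ [0, 1), let ξ₁, ξ₂ be nonnegative integrable random variables on the same probability space, let W be a Brownian motion, and for i = 1, 2 let (ℓ^i, X^i, L^i) denote the solution of X^i(t) = ξ_i + W(t) − α ℓ^i(t) + L^i(t) with ℓ^i(t) = E[L^i(t)] and (X^i, L^i) the Skorokhod problem solution for ξ_i + W − αℓ^i (both driven by the same W). Then for all t ≥ 0: sup_{0≤s≤t} |ℓ¹(s) − ℓ²(s)| ≤ E|ξ₁ − ξ₂| / (1 − α), sup_{0≤s≤t} E|L¹(s) − L²(s)| ≤ E|ξ₁ − ξ₂|/(1 − α), and E|X¹(t) − X²(t)| ≤ (2/(1 − α)) E|ξ₁ − ξ₂|. -/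

import Mathlib

/-!
The reflection terms `Lⁱ(t) = sup_{s ≤ t} (ξᵢ + W(s) - α ℓⁱ(s))₋` are the Skorokhod map applied
to paths driven by the same `W`, and that map is 1-Lipschitz for the sup norm on `[0, t]`:
`|L¹(t) - L²(t)| ≤ |ξ₁ - ξ₂| + sup_{s ≤ t} α |ℓ¹(s) - ℓ²(s)|`. Taking expectations,
`D = sup_{s ≤ t} α |ℓ¹(s) - ℓ²(s)|` satisfies `D ≤ α E|ξ₁ - ξ₂| + α D`, hence
`D ≤ α E|ξ₁ - ξ₂| / (1 - α)` as `α < 1`; the three bounds follow by the triangle inequality.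
This needs `D < ∞`. Where `α ℓⁱ` is unbounded on `[0, t]`, the supremum defining `Lⁱ(t)` takes the
junk value `0`, and the comparison at earlier times shows that `α ℓ¹` and `α ℓ²` are unbounded
on the same intervals.
-/

open Set Filter MeasureTheory ProbabilityTheory
open scoped ENNReal NNReal Topology

/-- A standard (one-dimensional) Brownian motion: starts at zero, has continuous paths,
Gaussian increments of the correct variance, and independent increments over disjoint
intervals. -/
def IsStandardBM {Ω : Type*} [MeasureSpace Ω] (B : ℝ → Ω → ℝ) : Prop :=
  (∀ ω, B 0 ω = 0) ∧
  (∀ ω, Continuous fun t => B t ω) ∧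
  (∀ t : ℝ, Measurable (B t)) ∧
  (∀ s t : ℝ, 0 ≤ s → s ≤ t →
    MeasureTheory.Measure.map (fun ω => B t ω - B s ω) (ℙ : MeasureTheory.Measure Ω) =
      ProbabilityTheory.gaussianReal 0 (Real.toNNReal (t - s))) ∧
  (∀ s t u v : ℝ, 0 ≤ s → s ≤ t → t ≤ u → u ≤ v →
    ProbabilityTheory.IndepFun (fun ω => B t ω - B s ω) (fun ω => B v ω - B u ω)
      (ℙ : MeasureTheory.Measure Ω))

theorem exists_countable_subset_forall_lt_exists {X : Type*} [PseudoMetricSpace X]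
    [TopologicalSpace.SeparableSpace X] (c : X → ℝ) (S : Set X) :
    ∃ D ⊆ S, D.Countable ∧ ∀ u ∈ S, ∀ U ∈ 𝓝 u, ∀ r < c u, ∃ v ∈ D ∩ U, r < c v := by
  set H : Set (X × ℝ) := {p | p.1 ∈ S ∧ p.2 < c p.1}
  obtain ⟨T, hTH, hTc, hHT⟩ :=
    (TopologicalSpace.IsSeparable.of_separableSpace H).exists_countable_dense_subset
  refine ⟨Prod.fst '' T, ?_, hTc.image _, fun u hu U hU r hr => ?_⟩
  · rintro _ ⟨p, hp, rfl⟩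
    exact (hTH hp).1
  obtain ⟨r', hr'⟩ := exists_between hr
  obtain ⟨p, ⟨hpU, hpr⟩, hpT⟩ :=
    mem_closure_iff_nhds.1 (hHT ⟨hu, hr'.2⟩) _ (prod_mem_nhds hU (Ioi_mem_nhds hr'.1))
  exact ⟨p.1, ⟨mem_image_of_mem _ hpT, hpU⟩, hpr.trans (hTH hpT).2⟩

theorem csSup_image_eq_of_forall_lt_exists {α β : Type*} [ConditionallyCompleteLinearOrder β]
    [NoMinOrder β] {f : α → β} {D S : Set α} (hDS : D ⊆ S)
    (h : ∀ u ∈ S, ∀ r < f u, ∃ v ∈ D, r < f v) : sSup (f '' D) = sSup (f '' S) := by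
  rcases S.eq_empty_or_nonempty with rfl | ⟨u, hu⟩
  · rw [subset_empty_iff.1 hDS]
  have hDne : (f '' D).Nonempty := by
    obtain ⟨r, hr⟩ := exists_lt (f u)
    obtain ⟨v, hv, -⟩ := h u hu r hr
    exact ⟨f v, mem_image_of_mem f hv⟩
  by_cases hb : BddAbove (f '' S)
  · refine le_antisymm (csSup_le_csSup hb hDne (image_mono hDS)) (csSup_le ⟨f u, u, hu, rfl⟩ ?_)
    rintro _ ⟨w, hw, rfl⟩
    refine le_of_forall_lt fun r hr => ?_
    obtain ⟨v, hv, hrv⟩ := h w hw r hr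
    exact hrv.trans_le (le_csSup (hb.mono (image_mono hDS)) (mem_image_of_mem f hv))
  · have hbD : ¬BddAbove (f '' D) := by
      rintro ⟨M, hM⟩
      refine hb ⟨M, ?_⟩
      rintro _ ⟨w, hw, rfl⟩
      refine not_lt.1 fun hMw => ?_
      obtain ⟨v, hv, hMv⟩ := h w hw M hMw
      exact (hM (mem_image_of_mem f hv)).not_gt hMv
    rw [csSup_of_not_bddAbove hb, csSup_of_not_bddAbove hbD]

theorem abs_csSup_image_sub_csSup_image_le {α : Type*} {f₁ f₂ : α → ℝ} {S : Set α} {δ : ℝ}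
    (hS : S.Nonempty) (hb : BddAbove (f₁ '' S)) (h : ∀ u ∈ S, |f₁ u - f₂ u| ≤ δ) :
    |sSup (f₁ '' S) - sSup (f₂ '' S)| ≤ δ := by
  obtain ⟨b, hb'⟩ := hb
  have hb₂ : BddAbove (f₂ '' S) := by
    refine ⟨b + δ, ?_⟩
    rintro _ ⟨u, hu, rfl⟩
    linarith [hb' (mem_image_of_mem f₁ hu), (abs_le.1 (h u hu)).1]
  rw [abs_sub_le_iff, sub_le_iff_le_add, sub_le_iff_le_add]
  constructor
  · refine csSup_le (hS.image f₁) ?_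
    rintro _ ⟨u, hu, rfl⟩
    linarith [le_csSup hb₂ (mem_image_of_mem f₂ hu), (abs_le.1 (h u hu)).2]
  · refine csSup_le (hS.image f₂) ?_
    rintro _ ⟨u, hu, rfl⟩
    linarith [le_csSup ⟨b, hb'⟩ (mem_image_of_mem f₁ hu), (abs_le.1 (h u hu)).1]

theorem bddBelow_image_sub_iff {α : Type*} [TopologicalSpace α] {g c : α → ℝ} {S : Set α}
    (hS : IsCompact S) (hg : ContinuousOn g S) :
    BddBelow ((fun u => g u - c u) '' S) ↔ BddAbove (c '' S) := by
  obtain ⟨a, ha⟩ := hS.bddAbove_image hg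
  obtain ⟨b, hb⟩ := hS.bddBelow_image hg
  constructor
  · rintro ⟨m, hm⟩
    refine ⟨a - m, ?_⟩
    rintro _ ⟨u, hu, rfl⟩
    linarith [ha (mem_image_of_mem g hu), hm (mem_image_of_mem (fun u => g u - c u) hu)]
  · rintro ⟨m, hm⟩
    refine ⟨b - m, ?_⟩
    rintro _ ⟨u, hu, rfl⟩
    linarith [hb (mem_image_of_mem g hu), hm (mem_image_of_mem c hu)]

theorem abs_integral_sub_integral_le {Ω : Type*} [MeasurableSpace Ω] {μ : Measure Ω}
    {f g : Ω → ℝ} (hfg : Integrable (f - g) μ) :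
    |∫ ω, f ω ∂μ - ∫ ω, g ω ∂μ| ≤ ∫ ω, |f ω - g ω| ∂μ := by
  by_cases hf : Integrable f μ
  · have hg : Integrable g μ := by simpa using hf.sub hfg
    rw [← integral_sub hf hg]
    exact abs_integral_le_integral_abs
  · have hg : ¬Integrable g μ := fun hg => hf (by simpa using hfg.add hg)
    rw [integral_undef hf, integral_undef hg, sub_self, abs_zero]
    exact integral_nonneg fun _ => abs_nonneg _

theorem integral_le_mul_integral_add {Ω : Type*} [MeasurableSpace Ω] {μ : Measure Ω}
    [IsProbabilityMeasure μ] {f g : Ω → ℝ} {a b : ℝ} (hg : Integrable g μ)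
    (hf : ∀ ω, 0 ≤ f ω) (hfg : ∀ ω, f ω ≤ a * g ω + b) :
    ∫ ω, f ω ∂μ ≤ a * ∫ ω, g ω ∂μ + b := by
  calc ∫ ω, f ω ∂μ ≤ ∫ ω, (a * g ω + b) ∂μ :=
        integral_mono_of_nonneg (ae_of_all _ hf) ((hg.const_mul a).add (integrable_const b))
          (ae_of_all _ hfg)
    _ = a * ∫ ω, g ω ∂μ + b := by
        rw [integral_add (hg.const_mul a) (integrable_const b), integral_const_mul,
          integral_const, probReal_univ, one_smul]

theorem le_div_one_sub_of_le_add_mul {α : Type*} {φ : α → ℝ} {S : Set α} {a κ : ℝ}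
    (hκ : κ < 1) (hb : BddAbove (φ '' S))
    (h : ∀ B, (∀ u ∈ S, φ u ≤ B) → ∀ u ∈ S, φ u ≤ a + κ * B) :
    ∀ u ∈ S, φ u ≤ a / (1 - κ) := by
  intro u hu
  set B := sSup (φ '' S)
  have hφB : ∀ v ∈ S, φ v ≤ B := fun v hv => le_csSup hb (mem_image_of_mem φ hv)
  have hB : B ≤ a + κ * B := csSup_le ⟨φ u, u, hu, rfl⟩ (by
    rintro _ ⟨v, hv, rfl⟩
    exact h B hφB v hv)
  rw [le_div_iff₀ (by linarith)]
  nlinarith [hφB u hu]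

theorem add_mul_div_one_sub {a α : ℝ} (hα : α ≠ 1) : a + α * a / (1 - α) = a / (1 - α) := by
  field_simp [sub_ne_zero.2 hα.symm]
  ring

noncomputable def skorokhodReflection (y : ℝ → ℝ) (t : ℝ) : ℝ :=
  sSup ((fun s => max (-y s) 0) '' Icc 0 t)

theorem skorokhodReflection_nonneg (y : ℝ → ℝ) (t : ℝ) : 0 ≤ skorokhodReflection y t :=
  Real.sSup_nonneg (by rintro _ ⟨s, -, rfl⟩; exact le_max_right _ _)

theorem skorokhodReflection_eq_zero_of_not_bddBelow {y : ℝ → ℝ} {t : ℝ}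
    (hy : ¬BddBelow (y '' Icc 0 t)) : skorokhodReflection y t = 0 := by
  refine Real.sSup_of_not_bddAbove fun ⟨M, hM⟩ => hy ⟨-M, ?_⟩
  rintro _ ⟨s, hs, rfl⟩
  linarith [le_max_left (-y s) 0, hM (mem_image_of_mem (fun s => max (-y s) 0) hs)]

theorem abs_skorokhodReflection_sub_le {y₁ y₂ : ℝ → ℝ} {t δ : ℝ} (ht : 0 ≤ t)
    (hy : BddBelow (y₁ '' Icc 0 t)) (h : ∀ s ∈ Icc 0 t, |y₁ s - y₂ s| ≤ δ) :
    |skorokhodReflection y₁ t - skorokhodReflection y₂ t| ≤ δ := by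
  obtain ⟨m, hm⟩ := hy
  refine abs_csSup_image_sub_csSup_image_le (nonempty_Icc.2 ht) ⟨max (-m) 0, ?_⟩ fun s hs => ?_
  · rintro _ ⟨s, hs, rfl⟩
    exact max_le_max_right 0 (neg_le_neg (hm (mem_image_of_mem y₁ hs)))
  · refine (abs_max_sub_max_le_abs _ _ 0).trans ?_
    rw [neg_sub_neg, abs_sub_comm]
    exact h s hs

theorem measurable_skorokhodReflection {Ω : Type*} [MeasurableSpace Ω] {g : Ω → ℝ → ℝ}
    (hgc : ∀ ω, Continuous (g ω)) (hgm : ∀ s, Measurable fun ω => g ω s) (c : ℝ → ℝ) (t : ℝ) :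
    Measurable fun ω => skorokhodReflection (fun s => g ω s - c s) t := by
  -- `c` need not be continuous, so the supremum is reduced to one over a countable set adapted
  -- to `c` rather than over the rationals.
  obtain ⟨D, hDS, hDc, hD⟩ := exists_countable_subset_forall_lt_exists c (Icc 0 t)
  have hsup : ∀ ω, skorokhodReflection (fun s => g ω s - c s) t
      = ⨆ v : D, max (-(g ω v - c v)) 0 := by
    intro ω
    rw [skorokhodReflection, ← csSup_image_eq_of_forall_lt_exists hDS, sSup_image']
    intro u hu r hr
    rcases lt_max_iff.1 hr with hr | hr
    · obtain ⟨ε, hε, hεr⟩ : ∃ ε > 0, r < c u - g ω u - 2 * ε :=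
        ⟨(c u - g ω u - r) / 4, by linarith, by linarith⟩
      have hU : g ω ⁻¹' Metric.ball (g ω u) ε ∈ 𝓝 u :=
        (hgc ω).continuousAt.preimage_mem_nhds (Metric.ball_mem_nhds _ hε)
      obtain ⟨v, ⟨hvD, hvU⟩, hv⟩ := hD u hu _ hU (c u - ε) (by linarith)
      have hgv := (abs_lt.1 (Real.dist_eq _ _ ▸ Metric.mem_ball.1 hvU)).2
      exact ⟨v, hvD, lt_max_of_lt_left (by linarith)⟩
    · obtain ⟨v, ⟨hvD, -⟩, -⟩ := hD u hu univ univ_mem (c u - 1) (by linarith)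
      exact ⟨v, hvD, lt_max_of_lt_right hr⟩
  have := hDc.to_subtype
  simp_rw [hsup]
  exact Measurable.iSup fun v => (((hgm v).sub_const _).neg).max measurable_const

structure IsMcKeanVlasovSolution {Ω : Type*} [MeasureSpace Ω] (α : ℝ) (ξ : Ω → ℝ)
    (W : ℝ → Ω → ℝ) (ℓ : ℝ → ℝ) (L : ℝ → Ω → ℝ) : Prop where
  L_eq : ∀ t, 0 ≤ t → ∀ ω, L t ω = skorokhodReflection (fun s => ξ ω + W s ω - α * ℓ s) t
  ℓ_eq : ∀ t, 0 ≤ t → ℓ t = ∫ ω, L t ω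

namespace IsMcKeanVlasovSolution

variable {Ω : Type*} [MeasureSpace Ω] {α : ℝ} {ξ ξ₁ ξ₂ : Ω → ℝ} {W : ℝ → Ω → ℝ}
  {ℓ ℓ₁ ℓ₂ : ℝ → ℝ} {L L₁ L₂ : ℝ → Ω → ℝ} {t : ℝ}

theorem ℓ_nonneg (h : IsMcKeanVlasovSolution α ξ W ℓ L) (ht : 0 ≤ t) : 0 ≤ ℓ t := by
  rw [h.ℓ_eq t ht]
  exact integral_nonneg fun ω => h.L_eq t ht ω ▸ skorokhodReflection_nonneg _ _

theorem measurable_L (h : IsMcKeanVlasovSolution α ξ W ℓ L) (hξ : Measurable ξ)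
    (hWc : ∀ ω, Continuous fun s => W s ω) (hWm : ∀ s, Measurable (W s)) (ht : 0 ≤ t) :
    Measurable (L t) := by
  rw [funext (h.L_eq t ht)]
  exact measurable_skorokhodReflection (fun ω => continuous_const.add (hWc ω))
    (fun s => hξ.add (hWm s)) (fun s => α * ℓ s) t

theorem eq_zero_of_not_bddAbove (h : IsMcKeanVlasovSolution α ξ W ℓ L)
    (hWc : ∀ ω, Continuous fun s => W s ω) (ht : 0 ≤ t)
    (hb : ¬BddAbove ((fun s => α * ℓ s) '' Icc 0 t)) : L t = 0 ∧ ℓ t = 0 := by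
  have hL : L t = 0 := funext fun ω => by
    rw [h.L_eq t ht ω, Pi.zero_apply]
    refine skorokhodReflection_eq_zero_of_not_bddBelow fun hy => hb ?_
    exact (bddBelow_image_sub_iff isCompact_Icc
      (continuous_const.add (hWc ω)).continuousOn).1 hy
  refine ⟨hL, ?_⟩
  rw [h.ℓ_eq t ht, hL]
  exact integral_zero Ω ℝ

theorem abs_L_sub_le (h₁ : IsMcKeanVlasovSolution α ξ₁ W ℓ₁ L₁)
    (h₂ : IsMcKeanVlasovSolution α ξ₂ W ℓ₂ L₂) (hWc : ∀ ω, Continuous fun s => W s ω)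
    (ht : 0 ≤ t) (hb : BddAbove ((fun s => α * ℓ₁ s) '' Icc 0 t)) {δ : ℝ}
    (hδ : ∀ s ∈ Icc 0 t, |α * ℓ₁ s - α * ℓ₂ s| ≤ δ) (ω : Ω) :
    |L₁ t ω - L₂ t ω| ≤ |ξ₁ ω - ξ₂ ω| + δ := by
  rw [h₁.L_eq t ht, h₂.L_eq t ht]
  refine abs_skorokhodReflection_sub_le ht ((bddBelow_image_sub_iff isCompact_Icc
    (continuous_const.add (hWc ω)).continuousOn).2 hb) fun s hs => ?_
  calc |ξ₁ ω + W s ω - α * ℓ₁ s - (ξ₂ ω + W s ω - α * ℓ₂ s)|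
      = |(ξ₁ ω - ξ₂ ω) - (α * ℓ₁ s - α * ℓ₂ s)| := by ring_nf
    _ ≤ |ξ₁ ω - ξ₂ ω| + |α * ℓ₁ s - α * ℓ₂ s| := abs_sub _ _
    _ ≤ |ξ₁ ω - ξ₂ ω| + δ := by gcongr; exact hδ s hs

theorem abs_ℓ_sub_le [IsProbabilityMeasure (ℙ : Measure Ω)]
    (h₁ : IsMcKeanVlasovSolution α ξ₁ W ℓ₁ L₁) (h₂ : IsMcKeanVlasovSolution α ξ₂ W ℓ₂ L₂)
    (hξ₁ : Measurable ξ₁) (hξ₂ : Measurable ξ₂) (hint : Integrable (ξ₁ - ξ₂))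
    (hWc : ∀ ω, Continuous fun s => W s ω) (hWm : ∀ s, Measurable (W s)) (ht : 0 ≤ t)
    (hb : BddAbove ((fun s => α * ℓ₁ s) '' Icc 0 t)) {δ : ℝ}
    (hδ : ∀ s ∈ Icc 0 t, |α * ℓ₁ s - α * ℓ₂ s| ≤ δ) :
    |ℓ₁ t - ℓ₂ t| ≤ (∫ ω, |ξ₁ ω - ξ₂ ω|) + δ := by
  have hL := h₁.abs_L_sub_le h₂ hWc ht hb hδ
  have hLint : Integrable (L₁ t - L₂ t) :=
    (hint.abs.add (integrable_const δ)).mono'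
      ((h₁.measurable_L hξ₁ hWc hWm ht).sub (h₂.measurable_L hξ₂ hWc hWm ht)).aestronglyMeasurable
      (ae_of_all _ hL)
  rw [h₁.ℓ_eq t ht, h₂.ℓ_eq t ht]
  refine (abs_integral_sub_integral_le hLint).trans ?_
  simpa using integral_le_mul_integral_add (a := 1) hint.abs (fun ω => abs_nonneg _)
    (by simpa using hL)


theorem abs_mul_ℓ_sub_le_of_bddAbove [IsProbabilityMeasure (ℙ : Measure Ω)]
    (h₁ : IsMcKeanVlasovSolution α ξ₁ W ℓ₁ L₁) (h₂ : IsMcKeanVlasovSolution α ξ₂ W ℓ₂ L₂)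
    (hα0 : 0 ≤ α) (hα1 : α < 1) (hξ₁ : Measurable ξ₁) (hξ₂ : Measurable ξ₂)
    (hint : Integrable (ξ₁ - ξ₂)) (hWc : ∀ ω, Continuous fun s => W s ω)
    (hWm : ∀ s, Measurable (W s)) (hb₁ : BddAbove ((fun s => α * ℓ₁ s) '' Icc 0 t))
    (hb₂ : BddAbove ((fun s => α * ℓ₂ s) '' Icc 0 t)) :
    ∀ u ∈ Icc 0 t, |α * ℓ₁ u - α * ℓ₂ u| ≤ α * (∫ ω, |ξ₁ ω - ξ₂ ω|) / (1 - α) := by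
  obtain ⟨b₁, hb₁'⟩ := hb₁
  obtain ⟨b₂, hb₂'⟩ := hb₂
  refine le_div_one_sub_of_le_add_mul hα1 ⟨b₁ + b₂, ?_⟩ fun B hB u hu => ?_
  · rintro _ ⟨u, hu, rfl⟩
    have := hb₁' (mem_image_of_mem _ hu)
    have := hb₂' (mem_image_of_mem _ hu)
    have := mul_nonneg hα0 (h₁.ℓ_nonneg hu.1)
    have := mul_nonneg hα0 (h₂.ℓ_nonneg hu.1)
    exact abs_le.2 ⟨by linarith, by linarith⟩
  · have hIcc : Icc 0 u ⊆ Icc 0 t := Icc_subset_Icc_right hu.2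
    have := h₁.abs_ℓ_sub_le h₂ hξ₁ hξ₂ hint hWc hWm hu.1
      ⟨b₁, fun _ hx => hb₁' (image_mono hIcc hx)⟩ fun s hs => hB s (hIcc hs)
    rw [← mul_sub, abs_mul, abs_of_nonneg hα0, ← mul_add]
    exact mul_le_mul_of_nonneg_left this hα0

theorem bddAbove_of_bddAbove [IsProbabilityMeasure (ℙ : Measure Ω)]
    (h₁ : IsMcKeanVlasovSolution α ξ₁ W ℓ₁ L₁) (h₂ : IsMcKeanVlasovSolution α ξ₂ W ℓ₂ L₂)
    (hα0 : 0 ≤ α) (hα1 : α < 1) (hξ₁ : Measurable ξ₁) (hξ₂ : Measurable ξ₂)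
    (hint : Integrable (ξ₁ - ξ₂)) (hWc : ∀ ω, Continuous fun s => W s ω)
    (hWm : ∀ s, Measurable (W s)) (hb₂ : BddAbove ((fun s => α * ℓ₂ s) '' Icc 0 t)) :
    BddAbove ((fun s => α * ℓ₁ s) '' Icc 0 t) := by
  obtain ⟨b, hb⟩ := hb₂
  refine ⟨max (b + α * (∫ ω, |ξ₁ ω - ξ₂ ω|) / (1 - α)) 0, ?_⟩
  rintro _ ⟨u, hu, rfl⟩
  have hIcc : Icc 0 u ⊆ Icc 0 t := Icc_subset_Icc_right hu.2
  by_cases hb₁u : BddAbove ((fun s => α * ℓ₁ s) '' Icc 0 u)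
  · have := h₁.abs_mul_ℓ_sub_le_of_bddAbove h₂ hα0 hα1 hξ₁ hξ₂ hint hWc hWm hb₁u
      ⟨b, fun _ hx => hb (image_mono hIcc hx)⟩ u ⟨hu.1, le_rfl⟩
    exact le_max_of_le_left (by linarith [(abs_le.1 this).2, hb (mem_image_of_mem _ hu)])
  · show α * ℓ₁ u ≤ _
    rw [(h₁.eq_zero_of_not_bddAbove hWc hu.1 hb₁u).2, mul_zero]
    exact le_max_right _ _

theorem abs_L_sub_le_and_abs_ℓ_sub_le [IsProbabilityMeasure (ℙ : Measure Ω)]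
    (h₁ : IsMcKeanVlasovSolution α ξ₁ W ℓ₁ L₁) (h₂ : IsMcKeanVlasovSolution α ξ₂ W ℓ₂ L₂)
    (hα0 : 0 ≤ α) (hα1 : α < 1) (hξ₁ : Measurable ξ₁) (hξ₂ : Measurable ξ₂)
    (hint : Integrable (ξ₁ - ξ₂)) (hWc : ∀ ω, Continuous fun s => W s ω)
    (hWm : ∀ s, Measurable (W s)) (ht : 0 ≤ t) :
    (∀ ω, |L₁ t ω - L₂ t ω| ≤ |ξ₁ ω - ξ₂ ω| + α * (∫ ω, |ξ₁ ω - ξ₂ ω|) / (1 - α)) ∧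
      |ℓ₁ t - ℓ₂ t| ≤ (∫ ω, |ξ₁ ω - ξ₂ ω|) / (1 - α) := by
  set E := ∫ ω, |ξ₁ ω - ξ₂ ω|
  have hE0 : 0 ≤ E := integral_nonneg fun _ => abs_nonneg _
  have hC0 : 0 ≤ α * E / (1 - α) := div_nonneg (mul_nonneg hα0 hE0) (sub_pos.2 hα1).le
  have hint' : Integrable (ξ₂ - ξ₁) := by simpa using hint.neg
  by_cases hb₁ : BddAbove ((fun s => α * ℓ₁ s) '' Icc 0 t)
  · have hb₂ := h₂.bddAbove_of_bddAbove h₁ hα0 hα1 hξ₂ hξ₁ hint' hWc hWm hb₁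
    have hδ := h₁.abs_mul_ℓ_sub_le_of_bddAbove h₂ hα0 hα1 hξ₁ hξ₂ hint hWc hWm hb₁ hb₂
    exact ⟨h₁.abs_L_sub_le h₂ hWc ht hb₁ hδ,
      add_mul_div_one_sub hα1.ne ▸ h₁.abs_ℓ_sub_le h₂ hξ₁ hξ₂ hint hWc hWm ht hb₁ hδ⟩
  · have hb₂ : ¬BddAbove ((fun s => α * ℓ₂ s) '' Icc 0 t) :=
      fun hb₂ => hb₁ (h₁.bddAbove_of_bddAbove h₂ hα0 hα1 hξ₁ hξ₂ hint hWc hWm hb₂)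
    obtain ⟨hL₁, hℓ₁⟩ := h₁.eq_zero_of_not_bddAbove hWc ht hb₁
    obtain ⟨hL₂, hℓ₂⟩ := h₂.eq_zero_of_not_bddAbove hWc ht hb₂
    refine ⟨fun ω => ?_, ?_⟩
    · rw [hL₁, hL₂, Pi.zero_apply, sub_zero, abs_zero]
      exact add_nonneg (abs_nonneg _) hC0
    · rw [hℓ₁, hℓ₂, sub_zero, abs_zero, ← add_mul_div_one_sub hα1.ne]
      exact add_nonneg hE0 hC0

end IsMcKeanVlasovSolution

theorem mckean_vlasov_subcritical_stability_general {Ω : Type*} [MeasureSpace Ω]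
    [IsProbabilityMeasure (ℙ : Measure Ω)]
    (α : ℝ) (hα0 : 0 ≤ α) (hα1 : α < 1)
    (ξ₁ ξ₂ : Ω → ℝ) (h1meas : Measurable ξ₁) (h2meas : Measurable ξ₂)
    (h1int : Integrable ξ₁ (ℙ : Measure Ω)) (h2int : Integrable ξ₂ (ℙ : Measure Ω))
    (W : ℝ → Ω → ℝ) (hW : IsStandardBM W)
    (ℓ₁ ℓ₂ : ℝ → ℝ) (L₁ L₂ X₁ X₂ : ℝ → Ω → ℝ)
    (hL₁ : ∀ t : ℝ, 0 ≤ t → ∀ ω, L₁ t ω =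
      sSup ((fun s => max (-(ξ₁ ω + W s ω - α * ℓ₁ s)) 0) '' Set.Icc 0 t))
    (hℓ₁ : ∀ t : ℝ, 0 ≤ t → ℓ₁ t = ∫ ω, L₁ t ω)
    (hX₁ : ∀ t : ℝ, 0 ≤ t → ∀ ω, X₁ t ω = ξ₁ ω + W t ω - α * ℓ₁ t + L₁ t ω)
    (hL₂ : ∀ t : ℝ, 0 ≤ t → ∀ ω, L₂ t ω =
      sSup ((fun s => max (-(ξ₂ ω + W s ω - α * ℓ₂ s)) 0) '' Set.Icc 0 t))
    (hℓ₂ : ∀ t : ℝ, 0 ≤ t → ℓ₂ t = ∫ ω, L₂ t ω)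
    (hX₂ : ∀ t : ℝ, 0 ≤ t → ∀ ω, X₂ t ω = ξ₂ ω + W t ω - α * ℓ₂ t + L₂ t ω) :
    ∀ t : ℝ, 0 ≤ t →
      (∀ s ∈ Set.Icc (0 : ℝ) t,
        |ℓ₁ s - ℓ₂ s| ≤ (∫ ω, |ξ₁ ω - ξ₂ ω|) / (1 - α)) ∧
      (∀ s ∈ Set.Icc (0 : ℝ) t,
        (∫ ω, |L₁ s ω - L₂ s ω|) ≤ (∫ ω, |ξ₁ ω - ξ₂ ω|) / (1 - α)) ∧
      (∫ ω, |X₁ t ω - X₂ t ω|) ≤ (2 / (1 - α)) * ∫ ω, |ξ₁ ω - ξ₂ ω| := by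
  intro t ht
  have h₁ : IsMcKeanVlasovSolution α ξ₁ W ℓ₁ L₁ := ⟨hL₁, hℓ₁⟩
  have h₂ : IsMcKeanVlasovSolution α ξ₂ W ℓ₂ L₂ := ⟨hL₂, hℓ₂⟩
  have hE_int := (h1int.sub h2int).abs
  have key := fun s (hs : 0 ≤ s) => h₁.abs_L_sub_le_and_abs_ℓ_sub_le h₂ hα0 hα1 h1meas h2meas
    (h1int.sub h2int) hW.2.1 hW.2.2.1 hs
  set E := ∫ ω, |ξ₁ ω - ξ₂ ω|
  refine ⟨fun s hs => (key s hs.1).2, fun s hs => ?_, ?_⟩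
  · calc (∫ ω, |L₁ s ω - L₂ s ω|) ≤ 1 * E + α * E / (1 - α) :=
          integral_le_mul_integral_add hE_int (fun _ => abs_nonneg _) (by simpa using (key s hs.1).1)
      _ = E / (1 - α) := by rw [one_mul, add_mul_div_one_sub hα1.ne]
  · have hX : ∀ ω, |X₁ t ω - X₂ t ω| ≤ 2 * |ξ₁ ω - ξ₂ ω| + 2 * (α * E / (1 - α)) := by
      intro ω
      have hℓ : |α * ℓ₁ t - α * ℓ₂ t| ≤ α * E / (1 - α) := by
        rw [← mul_sub, abs_mul, abs_of_nonneg hα0, mul_div_assoc]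
        exact mul_le_mul_of_nonneg_left (key t ht).2 hα0
      rw [hX₁ t ht, hX₂ t ht]
      calc |ξ₁ ω + W t ω - α * ℓ₁ t + L₁ t ω - (ξ₂ ω + W t ω - α * ℓ₂ t + L₂ t ω)|
          = |(ξ₁ ω - ξ₂ ω) - (α * ℓ₁ t - α * ℓ₂ t) + (L₁ t ω - L₂ t ω)| := by ring_nf
        _ ≤ |ξ₁ ω - ξ₂ ω| + |α * ℓ₁ t - α * ℓ₂ t| + |L₁ t ω - L₂ t ω| :=
          (abs_add_le _ _).trans (by gcongr; exact abs_sub _ _)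
        _ ≤ 2 * |ξ₁ ω - ξ₂ ω| + 2 * (α * E / (1 - α)) := by linarith [(key t ht).1 ω]
    calc (∫ ω, |X₁ t ω - X₂ t ω|) ≤ 2 * E + 2 * (α * E / (1 - α)) :=
          integral_le_mul_integral_add hE_int (fun _ => abs_nonneg _) hX
      _ = 2 / (1 - α) * E := by rw [← mul_add, add_mul_div_one_sub hα1.ne]; ring

/-- Subcritical stability (`α < 1`): for two solutions of the McKean–Vlasov SDE driven by
the same Brownian motion with integrable initial conditions `ξ₁`, `ξ₂`, one has
`sup_{s ≤ t} |ℓ¹ − ℓ²| ≤ E|ξ₁ − ξ₂|/(1 − α)`, `sup_{s ≤ t} E|L¹ − L²| ≤ E|ξ₁ − ξ₂|/(1 − α)`,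
and `E|X¹(t) − X²(t)| ≤ 2 E|ξ₁ − ξ₂|/(1 − α)`. -/
theorem mckean_vlasov_subcritical_stability {Ω : Type*} [MeasureSpace Ω]
    [IsProbabilityMeasure (ℙ : Measure Ω)]
    (α : ℝ) (hα0 : 0 ≤ α) (hα1 : α < 1)
    (ξ₁ ξ₂ : Ω → ℝ) (h1meas : Measurable ξ₁) (h2meas : Measurable ξ₂)
    (h1nn : ∀ ω, 0 ≤ ξ₁ ω) (h2nn : ∀ ω, 0 ≤ ξ₂ ω)
    (h1int : Integrable ξ₁ (ℙ : Measure Ω)) (h2int : Integrable ξ₂ (ℙ : Measure Ω))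
    (W : ℝ → Ω → ℝ) (hW : IsStandardBM W)
    (ℓ₁ ℓ₂ : ℝ → ℝ) (L₁ L₂ X₁ X₂ : ℝ → Ω → ℝ)
    (hL₁ : ∀ t : ℝ, 0 ≤ t → ∀ ω, L₁ t ω =
      sSup ((fun s => max (-(ξ₁ ω + W s ω - α * ℓ₁ s)) 0) '' Set.Icc 0 t))
    (hℓ₁ : ∀ t : ℝ, 0 ≤ t → ℓ₁ t = ∫ ω, L₁ t ω)
    (hX₁ : ∀ t : ℝ, 0 ≤ t → ∀ ω, X₁ t ω = ξ₁ ω + W t ω - α * ℓ₁ t + L₁ t ω)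
    (hL₂ : ∀ t : ℝ, 0 ≤ t → ∀ ω, L₂ t ω =
      sSup ((fun s => max (-(ξ₂ ω + W s ω - α * ℓ₂ s)) 0) '' Set.Icc 0 t))
    (hℓ₂ : ∀ t : ℝ, 0 ≤ t → ℓ₂ t = ∫ ω, L₂ t ω)
    (hX₂ : ∀ t : ℝ, 0 ≤ t → ∀ ω, X₂ t ω = ξ₂ ω + W t ω - α * ℓ₂ t + L₂ t ω) :
    ∀ t : ℝ, 0 ≤ t →
      (∀ s ∈ Set.Icc (0 : ℝ) t,
        |ℓ₁ s - ℓ₂ s| ≤ (∫ ω, |ξ₁ ω - ξ₂ ω|) / (1 - α)) ∧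
      (∀ s ∈ Set.Icc (0 : ℝ) t,
        (∫ ω, |L₁ s ω - L₂ s ω|) ≤ (∫ ω, |ξ₁ ω - ξ₂ ω|) / (1 - α)) ∧
      (∫ ω, |X₁ t ω - X₂ t ω|) ≤ (2 / (1 - α)) * ∫ ω, |ξ₁ ω - ξ₂ ω| :=
  mckean_vlasov_subcritical_stability_general α hα0 hα1 ξ₁ ξ₂ h1meas h2meas h1int h2int W hW ℓ₁ ℓ₂
    L₁ L₂ X₁ X₂ hL₁ hℓ₁ hX₁ hL₂ hℓ₂ hX₂
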